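/- arXiv:2203.13804 — 5 statements merged into one kernel-verified Lean document; each statement's English description precedes it below -/
import Mathlib

section
/- Let R and L be positive integers and let f(t) = Σ_{|m|≤RL} a_m e^{2πimt} be a trigonometric polynomial on the torus T with f(t) ≥ 0 for all t. Then f(t) ≤ 4R (f * F_L)(t) for all t ∈ T, where F_L is the L-th Fejér kernel and * denotes convolution. -/
open Finset

/-- The `n`-th Fejér kernel `F_n(t) = ∑_{k=-n+1}^{n-1} (1 - |k|/n) e^{2πikt}`. -/
noncomputable def Fejer (n : ℕ) (t : ℝ) : ℂ :=
  ∑ k ∈ Finset.Icc (-(n : ℤ) + 1) ((n : ℤ) - 1),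
    ((1 - |(k : ℝ)| / n : ℝ) : ℂ) * Complex.exp (2 * (Real.pi : ℂ) * Complex.I * (k : ℂ) * (t : ℂ))

noncomputable def Eint (k : ℤ) (t : ℝ) : ℂ :=
  Complex.exp (2 * (Real.pi : ℂ) * Complex.I * (k : ℂ) * (t : ℂ))

lemma Eint_add (j k : ℤ) (t : ℝ) : Eint (j + k) t = Eint j t * Eint k t := by
  unfold Eint
  rw [← Complex.exp_add]
  push_cast
  ring_nf

lemma Eint_zero (t : ℝ) : Eint 0 t = 1 := by simp [Eint]

lemma Eint_conj (k : ℤ) (t : ℝ) : (starRingEnd ℂ) (Eint k t) = Eint (-k) t := by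
  unfold Eint
  rw [← Complex.exp_conj]
  congr 1
  simp only [map_mul, Complex.conj_I, Complex.conj_ofReal, map_intCast, map_ofNat]
  push_cast
  ring

lemma Eint_norm (k : ℤ) (t : ℝ) : ‖Eint k t‖ = 1 := by
  unfold Eint
  rw [Complex.norm_exp]
  convert Real.exp_zero using 2
  simp [Complex.mul_re, Complex.mul_im]

lemma Eint_continuous (k : ℤ) : Continuous fun t : ℝ => Eint k t := by
  unfold Eint
  fun_prop

lemma Eint_integral (m : ℤ) : (∫ s in (0:ℝ)..1, Eint m s) = if m = 0 then 1 else 0 := by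
  rcases eq_or_ne m 0 with h | h
  · simp [h, Eint_zero]
  · simp only [h, if_neg]
    have hc : (2 * (Real.pi : ℂ) * Complex.I * (m : ℂ)) ≠ 0 := by
      simp [Real.pi_ne_zero, Complex.I_ne_zero, h]
    have : ∀ s : ℝ, Eint m s = Complex.exp ((2 * (Real.pi : ℂ) * Complex.I * (m : ℂ)) * s) := by
      intro s; rfl
    simp only [this]
    rw [integral_exp_mul_complex hc,
      show (2 * (Real.pi : ℂ) * Complex.I * (m : ℂ)) * ((1:ℝ):ℂ) = (m : ℂ) * (2 * Real.pi * Complex.I) by push_cast; ring,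
      Complex.exp_int_mul_two_pi_mul_I m,
      show (2 * (Real.pi : ℂ) * Complex.I * (m : ℂ)) * ((0:ℝ):ℂ) = 0 by simp,
      Complex.exp_zero, sub_self, zero_div]
    simp

noncomputable def Dk (n : ℕ) (t : ℝ) : ℂ := ∑ j ∈ range n, Eint j t

lemma Dk_continuous (n : ℕ) : Continuous fun t : ℝ => Dk n t :=
  continuous_finset_sum _ fun j _ => Eint_continuous j

lemma Dk_norm_le (n : ℕ) (t : ℝ) : ‖Dk n t‖ ≤ n := by
  calc ‖Dk n t‖ ≤ ∑ j ∈ range n, ‖Eint (j:ℤ) t‖ := norm_sum_le _ _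
    _ = n := by
        have : ∀ j ∈ range n, ‖Eint (j:ℤ) t‖ = 1 := by
          intro j _; rw [Eint_norm]
        rw [Finset.sum_congr rfl this]; simp

lemma Dk_mul (a b : ℕ) (t : ℝ) : Dk (a * b) t = Dk b t * Dk a ((b : ℝ) * t) := by
  induction a with
  | zero => simp [Dk]
  | succ a ih =>
    have h1 : (a + 1) * b = a * b + b := by ring
    rw [h1]
    unfold Dk at *
    rw [Finset.sum_range_add, ih, Finset.sum_range_succ]
    have h2 : ∀ x ∈ range b, Eint (↑(a * b + x)) t = Eint (↑(a*b)) t * Eint x t := by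
      intro x _
      rw [show ((a * b + x : ℕ) : ℤ) = (↑(a*b) : ℤ) + (x : ℤ) by push_cast; ring, Eint_add]
    rw [Finset.sum_congr rfl h2, ← Finset.mul_sum]
    have h3 : Eint (↑a) ((b:ℝ) * t) = Eint (↑(a*b)) t := by
      unfold Eint; push_cast; ring_nf
    rw [h3]; ring

lemma Dk_conj_mul (n : ℕ) (t : ℝ) :
    Dk n t * (starRingEnd ℂ) (Dk n t)
      = ∑ k ∈ Finset.Icc (-(n : ℤ) + 1) ((n : ℤ) - 1), (((n : ℤ) - |k| : ℤ) : ℂ) * Eint k t := by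
  induction n with
  | zero => simp [Dk]
  | succ n ih =>
    have hD : Dk (n + 1) t = Dk n t + Eint n t := Finset.sum_range_succ _ n
    have hcross1 : Dk n t * Eint (-(n:ℤ)) t = ∑ k ∈ Finset.Icc (-(n:ℤ)) (-1), Eint k t := by
      unfold Dk
      rw [Finset.sum_mul]
      refine Finset.sum_nbij' (fun j => (j : ℤ) - n) (fun k => (k + n).toNat) ?_ ?_ ?_ ?_ ?_
      · intro j hj; simp only [Finset.mem_range] at hj; simp only [Finset.mem_Icc]; omega
      · intro k hk; simp only [Finset.mem_Icc] at hk; simp only [Finset.mem_range]; omega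
      · intro j hj; simp only [Finset.mem_range] at hj; omega
      · intro k hk; simp only [Finset.mem_Icc] at hk; omega
      · intro j hj
        rw [← Eint_add, show (j:ℤ) + -(n:ℤ) = (j:ℤ) - n by ring]
    have hcross2 : Eint (n:ℤ) t * (starRingEnd ℂ) (Dk n t)
        = ∑ k ∈ Finset.Icc (1:ℤ) n, Eint k t := by
      unfold Dk
      rw [map_sum, Finset.mul_sum]
      refine Finset.sum_nbij' (fun j => (n : ℤ) - j) (fun k => (n - k).toNat) ?_ ?_ ?_ ?_ ?_
      · intro j hj; simp only [Finset.mem_range] at hj; simp only [Finset.mem_Icc]; omega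
      · intro k hk; simp only [Finset.mem_Icc] at hk; simp only [Finset.mem_range]; omega
      · intro j hj; simp only [Finset.mem_range] at hj; omega
      · intro k hk; simp only [Finset.mem_Icc] at hk; omega
      · intro j hj
        rw [Eint_conj, ← Eint_add, show (n:ℤ) + -(j:ℤ) = (n:ℤ) - j by ring]
    have hsplit : ∑ k ∈ Finset.Icc (-(n:ℤ)) n, Eint k t
        = (∑ k ∈ Finset.Icc (-(n:ℤ)) (-1), Eint k t) + Eint 0 t
          + ∑ k ∈ Finset.Icc (1:ℤ) n, Eint k t := by
      have h1 : Finset.Icc (-(n:ℤ)) n = Finset.Icc (-(n:ℤ)) (-1) ∪ Finset.Icc (0:ℤ) n := by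
        ext k; simp only [Finset.mem_union, Finset.mem_Icc]; omega
      have h2 : Disjoint (Finset.Icc (-(n:ℤ)) (-1)) (Finset.Icc (0:ℤ) n) := by
        rw [Finset.disjoint_left]; intro k hk hk'
        simp only [Finset.mem_Icc] at hk hk'; omega
      have h3 : Finset.Icc (0:ℤ) n = insert 0 (Finset.Icc (1:ℤ) n) := by
        ext k; simp only [Finset.mem_insert, Finset.mem_Icc]; omega
      have h4 : (0:ℤ) ∉ Finset.Icc (1:ℤ) n := by simp
      rw [h1, Finset.sum_union h2, h3, Finset.sum_insert h4]; ring
    have hext : (∑ k ∈ Finset.Icc (-(n:ℤ)+1) ((n:ℤ)-1), (((n : ℤ) - |k| : ℤ) : ℂ) * Eint k t)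
        = ∑ k ∈ Finset.Icc (-(n:ℤ)) n, (((n : ℤ) - |k| : ℤ) : ℂ) * Eint k t := by
      refine Finset.sum_subset (Finset.Icc_subset_Icc (by omega) (by omega)) ?_
      intro k hk hk'
      simp only [Finset.mem_Icc] at hk hk'
      have hkk : k = (n:ℤ) ∨ k = -(n:ℤ) := by omega
      rcases hkk with h | h <;> simp [h, Int.abs_natCast]
    have hRHS : (∑ k ∈ Finset.Icc (-((n:ℤ)+1) + 1) (((n:ℤ)+1) - 1),
          ((((n:ℤ)+1) - |k| : ℤ) : ℂ) * Eint k t)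
        = (∑ k ∈ Finset.Icc (-(n:ℤ)) n, (((n : ℤ) - |k| : ℤ) : ℂ) * Eint k t)
          + ∑ k ∈ Finset.Icc (-(n:ℤ)) n, Eint k t := by
      rw [← Finset.sum_add_distrib]
      have hb : Finset.Icc (-((n:ℤ)+1) + 1) (((n:ℤ)+1) - 1) = Finset.Icc (-(n:ℤ)) n := by
        congr 1 <;> ring
      rw [hb]
      refine Finset.sum_congr rfl fun k _ => ?_
      push_cast
      ring
    rw [hD, map_add, Eint_conj]
    calc (Dk n t + Eint n t) * ((starRingEnd ℂ) (Dk n t) + Eint (-(n:ℤ)) t)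
        = Dk n t * (starRingEnd ℂ) (Dk n t) + Dk n t * Eint (-(n:ℤ)) t
          + Eint (n:ℤ) t * (starRingEnd ℂ) (Dk n t) + Eint (n:ℤ) t * Eint (-(n:ℤ)) t := by ring
      _ = (∑ k ∈ Finset.Icc (-(n:ℤ)+1) ((n:ℤ)-1), (((n : ℤ) - |k| : ℤ) : ℂ) * Eint k t)
          + ((∑ k ∈ Finset.Icc (-(n:ℤ)) (-1), Eint k t) + Eint 0 t
             + ∑ k ∈ Finset.Icc (1:ℤ) n, Eint k t) := by
          rw [ih, hcross1, hcross2, ← Eint_add, show (n:ℤ) + -(n:ℤ) = 0 by ring]; ring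
      _ = (∑ k ∈ Finset.Icc (-(n:ℤ)) n, (((n : ℤ) - |k| : ℤ) : ℂ) * Eint k t)
          + ∑ k ∈ Finset.Icc (-(n:ℤ)) n, Eint k t := by rw [← hext, hsplit]
      _ = _ := by
          rw [← hRHS]
          refine Finset.sum_congr ?_ fun k _ => ?_
          · congr 1 <;> push_cast <;> ring
          · norm_cast

lemma Fejer_def' (n : ℕ) (t : ℝ) :
    Fejer n t = ∑ k ∈ Finset.Icc (-(n : ℤ) + 1) ((n : ℤ) - 1),
      ((1 - |(k : ℝ)| / n : ℝ) : ℂ) * Eint k t := rfl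

lemma Fejer_continuous (n : ℕ) : Continuous fun t : ℝ => Fejer n t := by
  simp only [Fejer_def']
  exact continuous_finset_sum _ fun k _ => continuous_const.mul (Eint_continuous k)

lemma Fejer_eq (n : ℕ) (t : ℝ) :
    Fejer n t = ((Complex.normSq (Dk n t) / n : ℝ) : ℂ) := by
  rcases Nat.eq_zero_or_pos n with h | hn
  · subst h
    rw [Fejer_def']
    rw [show Finset.Icc (-(0:ℕ) + 1 : ℤ) ((0:ℕ) - 1 : ℤ) = ∅ by
      apply Finset.Icc_eq_empty; norm_num]
    simp [Dk]
  · have hne : ((n:ℝ)) ≠ 0 := by positivity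
    have hneC : ((n:ℕ):ℂ) ≠ 0 := by exact_mod_cast Nat.cast_ne_zero.mpr hn.ne'
    have h1 : (Complex.normSq (Dk n t) : ℂ)
        = ∑ k ∈ Finset.Icc (-(n : ℤ) + 1) ((n : ℤ) - 1), (((n : ℤ) - |k| : ℤ) : ℂ) * Eint k t := by
      rw [← Complex.mul_conj]; exact Dk_conj_mul n t
    have h2 : ((Complex.normSq (Dk n t) / n : ℝ) : ℂ) = (Complex.normSq (Dk n t) : ℂ) / (n:ℂ) := by
      push_cast; ring
    rw [h2, h1, Finset.sum_div, Fejer_def']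
    refine Finset.sum_congr rfl fun k _ => ?_
    have h3 : ((1 - |(k:ℝ)| / n : ℝ) : ℂ) = (((n:ℤ) - |k| : ℤ) : ℂ) / (n:ℂ) := by
      have hr : (1 - |(k:ℝ)| / n : ℝ) = (((n:ℤ) - |k| : ℤ) : ℝ) / (n:ℝ) := by
        rw [Int.cast_sub, Int.cast_abs]
        push_cast
        field_simp
      rw [hr, Complex.ofReal_div]
      norm_cast
    rw [h3]
    ring

lemma conv_single (m : ℤ) (n : ℕ) (t : ℝ) :
    (∫ s in (0:ℝ)..1, Eint m (t - s) * Fejer n s)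
      = (if m ∈ Finset.Icc (-(n:ℤ)+1) ((n:ℤ)-1) then ((1 - |(m:ℝ)| / n : ℝ) : ℂ) else 0)
        * Eint m t := by
  have hsub : ∀ s : ℝ, Eint m (t - s) = Eint m t * Eint (-m) s := by
    intro s; unfold Eint; rw [← Complex.exp_add]; push_cast; ring_nf
  have hcalc : ∀ s : ℝ, Eint m (t - s) * Fejer n s
      = ∑ k ∈ Finset.Icc (-(n:ℤ)+1) ((n:ℤ)-1),
          ((1 - |(k:ℝ)| / n : ℝ) : ℂ) * Eint m t * Eint (k - m) s := by
    intro s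
    rw [hsub, Fejer_def', Finset.mul_sum]
    refine Finset.sum_congr rfl fun k _ => ?_
    rw [show (k:ℤ) - m = k + -m from sub_eq_add_neg k m, Eint_add]
    ring
  simp only [hcalc]
  rw [intervalIntegral.integral_finset_sum]
  · have h1 : ∀ k ∈ Finset.Icc (-(n:ℤ)+1) ((n:ℤ)-1),
        (∫ s in (0:ℝ)..1, ((1 - |(k:ℝ)| / n : ℝ) : ℂ) * Eint m t * Eint (k - m) s)
          = if k = m then ((1 - |(k:ℝ)| / n : ℝ) : ℂ) * Eint m t else 0 := by
      intro k _
      rw [intervalIntegral.integral_const_mul, Eint_integral]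
      by_cases h : k = m
      · subst h; simp
      · simp [h, sub_ne_zero.mpr h]
    rw [Finset.sum_congr rfl h1, Finset.sum_ite_eq', ite_mul, zero_mul]
  · intro k _
    exact (Continuous.intervalIntegrable
      ((continuous_const.mul (Eint_continuous (k - m))) : Continuous fun s : ℝ =>
        ((1 - |(k:ℝ)| / n : ℝ) : ℂ) * Eint m t * Eint (k - m) s) _ _)

/-- If `f(t) = ∑_{|m| ≤ RL} a_m e^{2πimt}` is a non-negative (real-valued) trigonometric
polynomial, then `f ≤ 4R (f * F_L)`, where `F_L` is the Fejér kernel and `*` is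
convolution on the torus. -/
theorem trig_poly_le_convolution_fejer (R L : ℕ) (hR : 0 < R) (hL : 0 < L)
    (a : ℤ → ℂ) (f : ℝ → ℂ)
    (hf : ∀ t : ℝ, f t = ∑ m ∈ Finset.Icc (-(R * L : ℤ)) (R * L),
      a m * Complex.exp (2 * (Real.pi : ℂ) * Complex.I * (m : ℂ) * (t : ℂ)))
    (hpos : ∀ t : ℝ, (f t).im = 0 ∧ 0 ≤ (f t).re) (t : ℝ) :
    (f t).re ≤ 4 * R * (∫ s in (0:ℝ)..1, f (t - s) * Fejer L s).re := by
  have hNpos : 0 < R * L := Nat.mul_pos hR hL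
  have hfc : Continuous f := by
    have hfe : f = fun x : ℝ => ∑ m ∈ Finset.Icc (-(R * L : ℤ)) (R * L),
        a m * Complex.exp (2 * (Real.pi : ℂ) * Complex.I * (m : ℂ) * (x : ℂ)) := funext hf
    rw [hfe]
    exact continuous_finset_sum _ fun m _ => continuous_const.mul (Eint_continuous m)
  -- convolution formula
  have conv : ∀ n : ℕ, (∫ s in (0:ℝ)..1, f (t - s) * Fejer n s)
      = ∑ m ∈ Finset.Icc (-(R * L : ℤ)) (R * L),
          a m * ((if m ∈ Finset.Icc (-(n:ℤ)+1) ((n:ℤ)-1)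
            then ((1 - |(m:ℝ)| / n : ℝ) : ℂ) else 0) * Eint m t) := by
    intro n
    have h1 : ∀ s : ℝ, f (t - s) * Fejer n s
        = ∑ m ∈ Finset.Icc (-(R * L : ℤ)) (R * L), a m * (Eint m (t - s) * Fejer n s) := by
      intro s
      rw [hf (t - s), Finset.sum_mul]
      refine Finset.sum_congr rfl fun m _ => ?_
      unfold Eint; ring
    simp only [h1]
    rw [intervalIntegral.integral_finset_sum]
    · refine Finset.sum_congr rfl fun m _ => ?_
      rw [intervalIntegral.integral_const_mul, conv_single]
    · intro m _
      apply Continuous.intervalIntegrable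
      exact continuous_const.mul
        (((Eint_continuous m).comp (continuous_const.sub continuous_id)).mul (Fejer_continuous n))
  -- scalar identity
  have scalar : ∀ m ∈ Finset.Icc (-(R * L : ℤ)) (R * L),
      2 * (if m ∈ Finset.Icc (-((2*(R*L) : ℕ):ℤ)+1) (((2*(R*L) : ℕ):ℤ)-1)
            then ((1 - |(m:ℝ)| / (2*(R*L) : ℕ) : ℝ) : ℂ) else 0)
        - (if m ∈ Finset.Icc (-((R*L : ℕ):ℤ)+1) (((R*L : ℕ):ℤ)-1)
            then ((1 - |(m:ℝ)| / (R*L : ℕ) : ℝ) : ℂ) else 0) = 1 := by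
    intro m hm
    simp only [Finset.mem_Icc] at hm
    have hN1 : (1:ℤ) ≤ (R*L : ℕ) := by exact_mod_cast hNpos
    have hRC : ((R:ℝ)) ≠ 0 := by positivity
    have hLC : ((L:ℝ)) ≠ 0 := by positivity
    by_cases hmem : m ∈ Finset.Icc (-((R*L : ℕ):ℤ)+1) (((R*L : ℕ):ℤ)-1)
    · have hmem' : -((R*L : ℕ):ℤ)+1 ≤ m ∧ m ≤ ((R*L : ℕ):ℤ)-1 := Finset.mem_Icc.mp hmem
      have hmem2 : m ∈ Finset.Icc (-((2*(R*L) : ℕ):ℤ)+1) (((2*(R*L) : ℕ):ℤ)-1) := by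
        simp only [Finset.mem_Icc]; push_cast at hmem' ⊢; omega
      rw [if_pos hmem2, if_pos hmem]
      have : (2 : ℝ) * (1 - |(m:ℝ)| / (2*(R*L) : ℕ)) - (1 - |(m:ℝ)| / (R*L : ℕ)) = 1 := by
        push_cast
        field_simp
        ring
      calc 2 * ((((1 - |(m:ℝ)| / (2*(R*L) : ℕ) : ℝ)) : ℂ))
            - (((1 - |(m:ℝ)| / (R*L : ℕ) : ℝ)) : ℂ)
          = (((2 : ℝ) * (1 - |(m:ℝ)| / (2*(R*L) : ℕ)) - (1 - |(m:ℝ)| / (R*L : ℕ)) : ℝ) : ℂ) := by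
            push_cast; ring
        _ = 1 := by rw [this]; norm_num
    · have hmem' : ¬(-((R*L : ℕ):ℤ)+1 ≤ m ∧ m ≤ ((R*L : ℕ):ℤ)-1) := by
        simpa [Finset.mem_Icc] using hmem
      have hcase : m = ((R*L : ℕ):ℤ) ∨ m = -((R*L : ℕ):ℤ) := by omega
      have hmem2 : m ∈ Finset.Icc (-((2*(R*L) : ℕ):ℤ)+1) (((2*(R*L) : ℕ):ℤ)-1) := by
        simp only [Finset.mem_Icc]; push_cast; omega
      rw [if_pos hmem2, if_neg hmem]
      have habs : |(m:ℝ)| = ((R*L : ℕ):ℝ) := by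
        rcases hcase with h | h <;> rw [h] <;> push_cast <;>
          simp [abs_of_nonneg, abs_of_nonpos, mul_nonneg]
      have : (2 : ℝ) * (1 - |(m:ℝ)| / (2*(R*L) : ℕ)) = 1 := by
        rw [habs]; push_cast; field_simp; ring
      calc 2 * ((((1 - |(m:ℝ)| / (2*(R*L) : ℕ) : ℝ)) : ℂ)) - 0
          = (((2 : ℝ) * (1 - |(m:ℝ)| / (2*(R*L) : ℕ)) : ℝ) : ℂ) := by push_cast; ring
        _ = 1 := by rw [this]; norm_num
  -- f t in terms of the two convolutions
  have hft : f t = 2 * (∫ s in (0:ℝ)..1, f (t - s) * Fejer (2*(R*L)) s)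
      - (∫ s in (0:ℝ)..1, f (t - s) * Fejer (R*L) s) := by
    rw [conv, conv, hf t, Finset.mul_sum, ← Finset.sum_sub_distrib]
    refine Finset.sum_congr rfl fun m hm => ?_
    have h := scalar m hm
    calc a m * Complex.exp (2 * (Real.pi : ℂ) * Complex.I * (m : ℂ) * (t : ℂ))
        = a m * (1 * Eint m t) := by unfold Eint; ring
      _ = _ := by rw [← h]; ring
  -- real representation of convolutions
  have hreal : ∀ n : ℕ, (∫ s in (0:ℝ)..1, f (t - s) * Fejer n s)
      = (((∫ s in (0:ℝ)..1, (f (t - s)).re * (Complex.normSq (Dk n s) / n)) : ℝ) : ℂ) := by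
    intro n
    rw [← intervalIntegral.integral_ofReal]
    refine intervalIntegral.integral_congr fun s _ => ?_
    have him := (hpos (t - s)).1
    have hfr : f (t - s) = (((f (t - s)).re : ℝ) : ℂ) := by
      apply Complex.ext <;> simp [him]
    conv_lhs => rw [hfr, Fejer_eq]
    norm_cast
  set g : ℕ → ℝ → ℝ := fun n s => (f (t - s)).re * (Complex.normSq (Dk n s) / n) with hg
  have hgc : ∀ n : ℕ, Continuous (g n) := fun n =>
    (Complex.continuous_re.comp (hfc.comp (continuous_const.sub continuous_id))).mul
      ((Complex.continuous_normSq.comp (Dk_continuous n)).div_const _)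
  have hgnonneg : ∀ n : ℕ, ∀ s : ℝ, 0 ≤ g n s := fun n s =>
    mul_nonneg (hpos _).2 (div_nonneg (Complex.normSq_nonneg _) (Nat.cast_nonneg n))
  -- pointwise inequality g (2*(R*L)) s ≤ 2*R * g L s
  have hpt : ∀ s : ℝ, g (2*(R*L)) s ≤ 2 * R * g L s := by
    intro s
    have hsplit : Dk (2*(R*L)) s = Dk L s * Dk (2*R) ((L:ℝ) * s) := by
      rw [show 2*(R*L) = (2*R)*L by ring]; exact Dk_mul (2*R) L s
    have hns : Complex.normSq (Dk (2*(R*L)) s)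
        = Complex.normSq (Dk L s) * Complex.normSq (Dk (2*R) ((L:ℝ) * s)) := by
      rw [hsplit, Complex.normSq_mul]
    have hb : Complex.normSq (Dk (2*R) ((L:ℝ) * s)) ≤ ((2*R : ℕ):ℝ)^2 := by
      rw [Complex.normSq_eq_norm_sq]
      have := Dk_norm_le (2*R) ((L:ℝ) * s)
      exact pow_le_pow_left₀ (norm_nonneg _) this 2
    have hkey : Complex.normSq (Dk (2*(R*L)) s) / ((2*(R*L) : ℕ):ℝ)
        ≤ 2 * R * (Complex.normSq (Dk L s) / L) := by
      rw [div_le_iff₀ (by positivity : (0:ℝ) < ((2*(R*L) : ℕ):ℝ))]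
      calc Complex.normSq (Dk (2*(R*L)) s)
          = Complex.normSq (Dk L s) * Complex.normSq (Dk (2*R) ((L:ℝ) * s)) := hns
        _ ≤ Complex.normSq (Dk L s) * ((2*R : ℕ):ℝ)^2 :=
            mul_le_mul_of_nonneg_left hb (Complex.normSq_nonneg _)
        _ = 2 * R * (Complex.normSq (Dk L s) / L) * ((2*(R*L) : ℕ):ℝ) := by
            have hLne : ((L:ℝ)) ≠ 0 := by positivity
            push_cast
            field_simp
    calc g (2*(R*L)) s = (f (t - s)).re * (Complex.normSq (Dk (2*(R*L)) s) / ((2*(R*L) : ℕ):ℝ)) := rfl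
      _ ≤ (f (t - s)).re * (2 * R * (Complex.normSq (Dk L s) / L)) :=
          mul_le_mul_of_nonneg_left hkey (hpos _).2
      _ = 2 * R * g L s := by rw [hg]; ring
  -- put it together
  have hre : (f t).re = 2 * (∫ s in (0:ℝ)..1, g (2*(R*L)) s) - (∫ s in (0:ℝ)..1, g (R*L) s) := by
    rw [hft, hreal (2*(R*L)), hreal (R*L)]
    norm_cast
  have hI1 : 0 ≤ ∫ s in (0:ℝ)..1, g (R*L) s :=
    intervalIntegral.integral_nonneg (by norm_num) fun s _ => hgnonneg _ s
  have hI2 : (∫ s in (0:ℝ)..1, g (2*(R*L)) s) ≤ 2 * R * ∫ s in (0:ℝ)..1, g L s := by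
    rw [← intervalIntegral.integral_const_mul]
    exact intervalIntegral.integral_mono_on (by norm_num)
      ((hgc _).intervalIntegrable _ _)
      ((continuous_const.mul (hgc L)).intervalIntegrable _ _)
      fun s _ => hpt s
  have hgoal : (∫ s in (0:ℝ)..1, f (t - s) * Fejer L s).re = ∫ s in (0:ℝ)..1, g L s := by
    rw [hreal L]; simp [hg]
  rw [hgoal]
  calc (f t).re = 2 * (∫ s in (0:ℝ)..1, g (2*(R*L)) s) - (∫ s in (0:ℝ)..1, g (R*L) s) := hre
    _ ≤ 2 * (∫ s in (0:ℝ)..1, g (2*(R*L)) s) := by linarith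
    _ ≤ 2 * (2 * R * ∫ s in (0:ℝ)..1, g L s) := by linarith
    _ = 4 * R * ∫ s in (0:ℝ)..1, g L s := by ring
end

section
/- If f : ℕ₀ → ℝ is non-negative, decreasing, and convex (meaning f(b) ≤ ((b-a)/(c-a))f(c) + ((c-b)/(c-a))f(a) whenever a ≤ b ≤ c), and f(ℓ) = 0 for some ℓ ∈ ℕ₀, then the real trigonometric polynomial s(t) = Σ_{m∈ℤ} f(|m|)e^{2πimt} satisfies s(t) ≥ 0 for all t ∈ T. -/
open Finset

/-- Number of pairs `(j,k)` in `[0,N)²` with `j - k = m` is `N - |m|` (truncated). -/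
lemma fejer_card (N : ℕ) (m : ℤ) :
    ((Finset.range N ×ˢ Finset.range N).filter
      (fun p => (p.1 : ℤ) - (p.2 : ℤ) = m)).card = N - m.natAbs := by
  rw [← Finset.card_range (N - m.natAbs)]
  apply Finset.card_bij' (fun p _ => min p.1 p.2)
      (fun i _ => (i + m.toNat, i + (-m).toNat))
  · intro p hp
    simp only [Finset.mem_filter, Finset.mem_product, Finset.mem_range] at hp
    simp only [Finset.mem_range]
    omega
  · intro i hi
    simp only [Finset.mem_range] at hi
    simp only [Finset.mem_filter, Finset.mem_product, Finset.mem_range]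
    omega
  · intro p hp
    simp only [Finset.mem_filter, Finset.mem_product, Finset.mem_range] at hp
    obtain ⟨⟨h1, h2⟩, h3⟩ := hp
    ext <;> simp <;> omega
  · intro i hi
    simp only [Finset.mem_range] at hi
    simp only
    omega

lemma tele_Ico (g : ℕ → ℝ) (k l : ℕ) (h : k ≤ l) :
    ∑ n ∈ Finset.Ico k l, (g n - g (n + 1)) = g k - g l := by
  induction l, h using Nat.le_induction with
  | base => simp
  | succ n hn ih => rw [Finset.sum_Ico_succ_top hn, ih]; ring

/-- If `f : ℕ → ℝ` is non-negative, decreasing and convex, and `f(ℓ) = 0` for some `ℓ`,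
then the real trigonometric polynomial `s(t) = ∑_{m ∈ ℤ} f(|m|) e^{2πimt}` is
non-negative (the sum is supported on `|m| ≤ ℓ` since `f` vanishes from `ℓ` on). -/
theorem trig_poly_of_convex_nonneg (f : ℕ → ℝ)
    (hnonneg : ∀ m, 0 ≤ f m)
    (hdec : ∀ m n : ℕ, m ≤ n → f n ≤ f m)
    (hconvex : ∀ a b c : ℕ, a ≤ b → b ≤ c → a < c →
      f b ≤ (((b : ℝ) - a) / ((c : ℝ) - a)) * f c + (((c : ℝ) - b) / ((c : ℝ) - a)) * f a)
    (ℓ : ℕ) (hℓ : f ℓ = 0) (t : ℝ) :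
    0 ≤ (∑ m ∈ Finset.Icc (-(ℓ : ℤ)) (ℓ : ℤ),
      ((f m.natAbs : ℝ) : ℂ) *
        Complex.exp (2 * (Real.pi : ℂ) * Complex.I * (m : ℂ) * (t : ℂ))).re := by
  -- f vanishes from ℓ on
  have h0 : ∀ m, ℓ ≤ m → f m = 0 :=
    fun m hm => le_antisymm (hℓ ▸ hdec ℓ m hm) (hnonneg m)
  -- second differences
  set D : ℕ → ℝ := fun n => f n - 2 * f (n + 1) + f (n + 2) with hD
  have hDnonneg : ∀ n, 0 ≤ D n := by
    intro n
    have := hconvex n (n + 1) (n + 2) (by omega) (by omega) (by omega)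
    have h2 : ((n : ℝ) + 2 - n) = 2 := by ring
    push_cast at this
    rw [h2] at this
    norm_num at this
    simp only [hD]
    linarith
  -- telescoping: second differences sum to first differences
  have tele2 : ∀ k : ℕ, ∑ n ∈ Finset.Ico k ℓ, D n = f k - f (k + 1) := by
    intro k
    rcases le_or_gt k ℓ with hk | hk
    · have ht := tele_Ico (fun n => f n - f (n + 1)) k ℓ hk
      beta_reduce at ht
      have he : ∑ n ∈ Finset.Ico k ℓ, D n
          = ∑ n ∈ Finset.Ico k ℓ, ((f n - f (n + 1)) - (f (n + 1) - f (n + 1 + 1))) := by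
        apply Finset.sum_congr rfl
        intro n _
        simp only [hD]; ring
      rw [he, ht, h0 ℓ le_rfl, h0 (ℓ + 1) (by omega)]
      ring
    · rw [Finset.Ico_eq_empty (by omega), Finset.sum_empty,
        h0 k (by omega), h0 (k + 1) (by omega)]
      ring
  -- the coefficient identity
  have coeff : ∀ k : ℕ, f k = ∑ n ∈ Finset.range ℓ, D n * ((n + 1 - k : ℕ) : ℝ) := by
    have step : ∀ k : ℕ,
        (∑ n ∈ Finset.range ℓ, D n * ((n + 1 - k : ℕ) : ℝ))
          - (∑ n ∈ Finset.range ℓ, D n * ((n + 1 - (k + 1) : ℕ) : ℝ))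
        = f k - f (k + 1) := by
      intro k
      rw [← Finset.sum_sub_distrib]
      have : ∀ n ∈ Finset.range ℓ,
          D n * ((n + 1 - k : ℕ) : ℝ) - D n * ((n + 1 - (k + 1) : ℕ) : ℝ)
          = if k ≤ n then D n else 0 := by
        intro n _
        rcases le_or_gt k n with h | h
        · have e1 : (n + 1 - k : ℕ) = (n - k : ℕ) + 1 := by omega
          have e2 : (n + 1 - (k + 1) : ℕ) = (n - k : ℕ) := by omega
          rw [if_pos h, e1, e2]
          push_cast
          ring
        · have e1 : (n + 1 - k : ℕ) = 0 := by omega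
          have e2 : (n + 1 - (k + 1) : ℕ) = 0 := by omega
          simp [e1, e2, not_le.mpr h]
      rw [Finset.sum_congr rfl this, Finset.sum_ite, Finset.sum_const_zero, add_zero]
      have hf : (Finset.range ℓ).filter (fun n => k ≤ n) = Finset.Ico k ℓ := by
        ext n
        simp [Finset.mem_filter, Finset.mem_range, Finset.mem_Ico]
        omega
      rw [hf, tele2]
    -- downward induction
    have main : ∀ d k : ℕ, ℓ ≤ k + d →
        f k = ∑ n ∈ Finset.range ℓ, D n * ((n + 1 - k : ℕ) : ℝ) := by
      intro d
      induction d with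
      | zero =>
        intro k hk
        rw [h0 k (by omega)]
        symm
        apply Finset.sum_eq_zero
        intro n hn
        simp only [Finset.mem_range] at hn
        have : (n + 1 - k : ℕ) = 0 := by omega
        simp [this]
      | succ d ih =>
        intro k hk
        rcases le_or_gt ℓ (k + d) with h | h
        · exact ih k h
        · have h1 := ih (k + 1) (by omega)
          have h2 := step k
          linarith
    intro k
    exact main ℓ k (by omega)
  -- the exponential function
  set E : ℤ → ℂ := fun m => Complex.exp (2 * (Real.pi : ℂ) * Complex.I * (m : ℂ) * (t : ℂ))
    with hE
  have hEadd : ∀ a b : ℤ, E (a + b) = E a * E b := by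
    intro a b
    simp only [hE, ← Complex.exp_add]
    congr 1
    push_cast
    ring
  have hEconj : ∀ m : ℤ, (starRingEnd ℂ) (E m) = E (-m) := by
    intro m
    simp only [hE, ← Complex.exp_conj]
    congr 1
    simp only [map_mul, Complex.conj_I, Complex.conj_ofReal, map_intCast, map_ofNat]
    push_cast
    ring
  -- Fejér kernel identity
  have fejer : ∀ N : ℕ, (N : ℤ) ≤ (ℓ : ℤ) →
      ∑ m ∈ Finset.Icc (-(ℓ : ℤ)) (ℓ : ℤ), ((N - m.natAbs : ℕ) : ℂ) * E m
        = (∑ j ∈ Finset.range N, E j) * (∑ k ∈ Finset.range N, E (-(k : ℤ))) := by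
    intro N hN
    rw [Finset.sum_mul_sum]
    have hprod : (∑ j ∈ Finset.range N, ∑ k ∈ Finset.range N, E j * E (-(k : ℤ)))
        = ∑ p ∈ Finset.range N ×ˢ Finset.range N, E ((p.1 : ℤ) - (p.2 : ℤ)) := by
      rw [Finset.sum_product]
      apply Finset.sum_congr rfl
      intro j _
      apply Finset.sum_congr rfl
      intro k _
      rw [sub_eq_add_neg, hEadd]
    rw [hprod]
    rw [← Finset.sum_fiberwise_of_maps_to (g := fun p : ℕ × ℕ => (p.1 : ℤ) - (p.2 : ℤ))
      (fun p hp => by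
        simp only [Finset.mem_product, Finset.mem_range] at hp
        have : ((p.1 : ℤ) - (p.2 : ℤ)) ∈ Finset.Icc (-(ℓ : ℤ)) (ℓ : ℤ) :=
          Finset.mem_Icc.mpr ⟨by omega, by omega⟩
        exact this)]
    apply Finset.sum_congr rfl
    intro m _
    have : ∑ p ∈ (Finset.range N ×ˢ Finset.range N).filter
        (fun p => (p.1 : ℤ) - (p.2 : ℤ) = m), E ((p.1 : ℤ) - (p.2 : ℤ))
        = ∑ p ∈ (Finset.range N ×ˢ Finset.range N).filter
        (fun p => (p.1 : ℤ) - (p.2 : ℤ) = m), E m := by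
      apply Finset.sum_congr rfl
      intro p hp
      simp only [Finset.mem_filter] at hp
      rw [hp.2]
    rw [this, Finset.sum_const, fejer_card, nsmul_eq_mul]
  -- rewrite the whole sum
  have key : (∑ m ∈ Finset.Icc (-(ℓ : ℤ)) (ℓ : ℤ), ((f m.natAbs : ℝ) : ℂ) * E m)
      = ∑ n ∈ Finset.range ℓ, ((D n : ℝ) : ℂ) *
          ((∑ j ∈ Finset.range (n + 1), E j) * (∑ k ∈ Finset.range (n + 1), E (-(k : ℤ)))) := by
    have e1 : ∀ m : ℤ, ((f m.natAbs : ℝ) : ℂ) * E m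
        = ∑ n ∈ Finset.range ℓ, ((D n : ℝ) : ℂ) * (((n + 1 - m.natAbs : ℕ) : ℂ) * E m) := by
      intro m
      rw [coeff m.natAbs]
      push_cast
      rw [Finset.sum_mul]
      apply Finset.sum_congr rfl
      intro n _
      ring
    rw [Finset.sum_congr rfl (fun m _ => e1 m), Finset.sum_comm]
    apply Finset.sum_congr rfl
    intro n hn
    simp only [Finset.mem_range] at hn
    rw [← Finset.mul_sum, fejer (n + 1) (by omega)]
  rw [key, Complex.re_sum]
  apply Finset.sum_nonneg
  intro n _
  have hg : (∑ k ∈ Finset.range (n + 1), E (-(k : ℤ)))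
      = (starRingEnd ℂ) (∑ j ∈ Finset.range (n + 1), E j) := by
    rw [map_sum]
    exact Finset.sum_congr rfl fun j _ => (hEconj j).symm
  rw [hg, Complex.mul_conj]
  simp only [Complex.mul_re, Complex.ofReal_re, Complex.ofReal_im, zero_mul, sub_zero]
  exact mul_nonneg (hDnonneg n) (Complex.normSq_nonneg _)
end

section
/- Let (X, 𝒜, μ, T) be a measure preserving system and E ∈ 𝒜 with μ(E) > 0. Then there exists a positive integer n with n ≤ 2/μ(E) such that μ(E ∩ T^{-n}E) ≥ μ(E)²/2. -/
/-!
Put `N = ⌊2/μ(E)⌋`. The `N + 1` sets `T⁻ⁱE`, `i ≤ N`, have total measure `(N + 1) μ(E) > 2`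
inside a space of measure `1`, so by the Bonferroni inequality their pairwise intersections
have total measure at least `(N + 1) μ(E) - 1`. By invariance `μ(T⁻ⁱE ∩ T⁻ʲE) = μ(E ∩ T⁻⁽ⁱ⁻ʲ⁾E)`,
so some `1 ≤ k ≤ N` has `μ(E ∩ T⁻ᵏE) ≥ 2((N + 1) μ(E) - 1) / (N (N + 1)) ≥ μ(E)² / 2`.
-/

open MeasureTheory Finset

theorem sum_measureReal_le_measureReal_biUnion_add_sum_inter {X : Type*} [MeasurableSpace X]
    (μ : Measure X) [IsFiniteMeasure μ] {A : ℕ → Set X} (hA : ∀ i, MeasurableSet (A i)) (n : ℕ) :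
    ∑ i ∈ range n, μ.real (A i) ≤
      μ.real (⋃ i ∈ range n, A i) + ∑ i ∈ range n, ∑ j ∈ range i, μ.real (A i ∩ A j) := by
  induction n with
  | zero => simp
  | succ n ih =>
    set U := ⋃ i ∈ range n, A i
    have hunion : ⋃ i ∈ range (n + 1), A i = U ∪ A n := by
      rw [range_add_one, set_biUnion_insert, Set.union_comm]
    have hinter : μ.real (U ∩ A n) ≤ ∑ j ∈ range n, μ.real (A n ∩ A j) := by
      rw [Set.iUnion₂_inter]
      simpa only [Set.inter_comm] using measureReal_biUnion_finset_le (range n) (A · ∩ A n)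
    have := measureReal_union_add_inter (hA n) (measure_ne_top μ U)
    simp only [sum_range_succ, hunion]
    linarith

namespace MeasureTheory.MeasurePreserving

variable {X : Type*} [MeasurableSpace X] {μ : Measure X} {T : X → X} {E : Set X}

theorem measureReal_preimage_iterate_inter (hT : MeasurePreserving T μ μ) (hE : MeasurableSet E)
    {i j : ℕ} (hji : j ≤ i) :
    μ.real (T^[i] ⁻¹' E ∩ T^[j] ⁻¹' E) = μ.real (E ∩ T^[i - j] ⁻¹' E) := by
  have hpre : T^[i] ⁻¹' E ∩ T^[j] ⁻¹' E = T^[j] ⁻¹' (T^[i - j] ⁻¹' E ∩ E) := by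
    rw [Set.preimage_inter, ← Set.preimage_comp, ← Function.iterate_add, Nat.sub_add_cancel hji]
  rw [hpre, (hT.iterate j).measureReal_preimage
    (((hT.iterate _).measurable hE).inter hE).nullMeasurableSet, Set.inter_comm]

theorem exists_measureReal_inter_preimage_iterate_ge [IsFiniteMeasure μ]
    (hT : MeasurePreserving T μ μ) (hE : MeasurableSet E) {N : ℕ} (hN : 0 < N) :
    ∃ k, 0 < k ∧ k ≤ N ∧ 2 * ((N + 1) * μ.real E - μ.real Set.univ) ≤
      N * (N + 1) * μ.real (E ∩ T^[k] ⁻¹' E) := by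
  set f : ℕ → ℝ := fun k ↦ μ.real (E ∩ T^[k] ⁻¹' E)
  obtain ⟨k, hk, hkmax⟩ := (Icc 1 N).exists_max_image f (nonempty_Icc.2 hN)
  obtain ⟨hk1, hkN⟩ := mem_Icc.1 hk
  refine ⟨k, hk1, hkN, ?_⟩
  have hbonf := sum_measureReal_le_measureReal_biUnion_add_sum_inter μ
    (fun i ↦ (hT.iterate i).measurable hE) (N + 1)
  have hsum : ∑ i ∈ range (N + 1), μ.real (T^[i] ⁻¹' E) = (N + 1) * μ.real E := by
    simp [(hT.iterate _).measureReal_preimage hE.nullMeasurableSet]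
  have hunion : μ.real (⋃ i ∈ range (N + 1), T^[i] ⁻¹' E) ≤ μ.real Set.univ :=
    measureReal_mono (Set.subset_univ _)
  have hpairs : ∑ i ∈ range (N + 1), ∑ j ∈ range i, μ.real (T^[i] ⁻¹' E ∩ T^[j] ⁻¹' E) ≤
      ∑ i ∈ range (N + 1), (i : ℝ) * f k := by
    refine sum_le_sum fun i hi ↦ ?_
    calc ∑ j ∈ range i, μ.real (T^[i] ⁻¹' E ∩ T^[j] ⁻¹' E) ≤ ∑ j ∈ range i, f k := by
          refine sum_le_sum fun j hj ↦ ?_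
          rw [mem_range] at hi hj
          rw [hT.measureReal_preimage_iterate_inter hE hj.le]
          exact hkmax (i - j) (mem_Icc.2 ⟨by omega, by omega⟩)
      _ = i * f k := by simp
  have hgauss : (∑ i ∈ range (N + 1), (i : ℝ)) * 2 = N * (N + 1) := by
    have := sum_range_id_mul_two (N + 1)
    rw [Nat.add_sub_cancel, mul_comm (N + 1)] at this
    simpa using congrArg (Nat.cast : ℕ → ℝ) this
  rw [← sum_mul] at hpairs
  rw [← hgauss]
  linarith

end MeasureTheory.MeasurePreserving

/-- Quantitative Poincaré recurrence: if `(X, μ, T)` is a measure preserving system and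
`μ(E) > 0`, then for some `n ≤ 2/μ(E)` we have `μ(E ∩ T⁻ⁿE) ≥ μ(E)²/2`. -/
theorem quantitative_poincare {X : Type*} [MeasurableSpace X]
    (μ : Measure X) [IsProbabilityMeasure μ] (T : X → X)
    (hT : MeasurePreserving T μ μ) (E : Set X) (hE : MeasurableSet E)
    (hpos : 0 < μ E) :
    ∃ n : ℕ, 0 < n ∧ (n : ℝ) ≤ 2 / (μ E).toReal ∧
      (μ E).toReal ^ 2 / 2 ≤ (μ (E ∩ (T^[n]) ⁻¹' E)).toReal := by
  simp only [← measureReal_def]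
  set a := μ.real E
  have ha0 : 0 < a := ENNReal.toReal_pos hpos.ne' (measure_ne_top μ E)
  set N := ⌊2 / a⌋₊
  have hNa : N * a ≤ 2 := (le_div_iff₀ ha0).1 (Nat.floor_le (by positivity))
  have hNa' : 2 < (N + 1) * a := (div_lt_iff₀ ha0).1 (Nat.lt_floor_add_one _)
  have ha1 : a ≤ 1 := measureReal_le_one
  have hN : 0 < N := Nat.floor_pos.2 <| (le_div_iff₀ ha0).2 <| by linarith
  obtain ⟨k, hk, hkN, hbound⟩ := hT.exists_measureReal_inter_preimage_iterate_ge hE hN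
  refine ⟨k, hk, (le_div_iff₀ ha0).2 <| le_trans (by gcongr) hNa, ?_⟩
  rw [probReal_univ] at hbound
  have hscaled : N * (N + 1) * (a ^ 2 / 2) ≤ N * (N + 1) * μ.real (E ∩ T^[k] ⁻¹' E) :=
    calc N * (N + 1) * (a ^ 2 / 2) = (N * a) * ((N + 1) * a) / 2 := by ring
      _ ≤ 2 * ((N + 1) * a) / 2 := by gcongr
      _ ≤ 2 * ((N + 1) * a - 1) := by linarith
      _ ≤ _ := hbound
  exact le_of_mul_le_mul_left hscaled (by positivity)
end

section
/- Let Q be an even positive integer, ℓ ∈ ℕ, and P ∈ ℕ with P > Q·log ℓ. Then for any subset B ⊆ (ℤ/Qℤ)^P with |B| > Q^P/ℓ, there exist points x, x' ∈ B and an index s ∈ {0,1,...,P-1} such that: x_i = x'_i for i = 0,...,s-1; x_s = 0 and x'_s = Q/2; and d(x_i, x'_i) ≤ 2 for i = s+1,...,P-1, where d is the natural metric on ℤ/Qℤ. -/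
open Finset

/-- The natural metric on `ℤ/Qℤ`: `d(a, b) = min{|m - n + kQ| : k ∈ ℤ}` for representatives
`m, n` of `a, b`. -/
def zmodDist {Q : ℕ} (a b : ZMod Q) : ℕ := min (a - b).val (b - a).val

lemma zmodDist_comm {Q : ℕ} (a b : ZMod Q) : zmodDist a b = zmodDist b a := by
  unfold zmodDist; exact min_comm _ _

lemma zmodDist_le_of_eq_add {Q : ℕ} [NeZero Q] {a b : ZMod Q} (k : ℕ)
    (h : a = b + (k : ZMod Q)) : zmodDist a b ≤ k := by
  have : (a - b).val ≤ k := by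
    rw [h]; simp only [add_sub_cancel_left]
    calc ((k : ZMod Q)).val = k % Q := ZMod.val_natCast Q k
    _ ≤ k := Nat.mod_le k Q
  exact le_trans (min_le_left _ _) this

/-- any two of p, p+1, p+2 are at distance ≤ 2 -/
lemma window_dist {Q : ℕ} [NeZero Q] {p a b : ZMod Q}
    (ha : a = p ∨ a = p + 1 ∨ a = p + 2) (hb : b = p ∨ b = p + 1 ∨ b = p + 2) :
    zmodDist a b ≤ 2 := by
  have h1 : (1 : ZMod Q) = ((1 : ℕ) : ZMod Q) := by norm_cast
  have h2 : (2 : ZMod Q) = ((2 : ℕ) : ZMod Q) := by norm_cast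
  have key : ∀ x y : ZMod Q, x = y ∨ x = y + 1 ∨ x = y + 2 → zmodDist x y ≤ 2 := by
    intro x y h
    rcases h with h | h | h
    · exact le_trans (zmodDist_le_of_eq_add 0 (by simp [h])) (by norm_num)
    · exact le_trans (zmodDist_le_of_eq_add 1 (by rw [h, h1])) (by norm_num)
    · exact zmodDist_le_of_eq_add 2 (by rw [h, h2])
  rcases ha with ha | ha | ha <;> rcases hb with hb | hb | hb
  · exact key a b (Or.inl (by rw [ha, hb]))
  · rw [zmodDist_comm]; exact key b a (Or.inr (Or.inl (by rw [ha, hb])))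
  · rw [zmodDist_comm]; exact key b a (Or.inr (Or.inr (by rw [ha, hb])))
  · exact key a b (Or.inr (Or.inl (by rw [ha, hb])))
  · exact key a b (Or.inl (by rw [ha, hb]))
  · rw [zmodDist_comm]; exact key b a (Or.inr (Or.inl (by rw [ha, hb, add_assoc]; norm_num)))
  · exact key a b (Or.inr (Or.inr (by rw [ha, hb])))
  · exact key a b (Or.inr (Or.inl (by rw [ha, hb, add_assoc]; norm_num)))
  · exact key a b (Or.inl (by rw [ha, hb]))

/-- neighborhood on the cycle -/
def nbhd {Q : ℕ} (S : Finset (ZMod Q)) : Finset (ZMod Q) :=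
  S ∪ S.image (· - 1) ∪ S.image (· - 2)

lemma mem_nbhd_iff {Q : ℕ} (S : Finset (ZMod Q)) (p : ZMod Q) :
    p ∈ nbhd S ↔ ∃ a ∈ S, a = p ∨ a = p + 1 ∨ a = p + 2 := by
  unfold nbhd
  simp only [Finset.mem_union, Finset.mem_image]
  constructor
  · rintro ((h | ⟨a, ha, rfl⟩) | ⟨a, ha, rfl⟩)
    · exact ⟨p, h, Or.inl rfl⟩
    · exact ⟨a, ha, Or.inr (Or.inl (by ring))⟩
    · exact ⟨a, ha, Or.inr (Or.inr (by ring))⟩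
  · rintro ⟨a, ha, (rfl | h | h)⟩
    · exact Or.inl (Or.inl ha)
    · exact Or.inl (Or.inr ⟨a, ha, by rw [h]; ring⟩)
    · exact Or.inr ⟨a, ha, by rw [h]; ring⟩

/-- cycle isoperimetry: if the neighborhood isn't everything, it gains 2 -/
lemma nbhd_card {Q : ℕ} [NeZero Q] (S : Finset (ZMod Q)) (hne : S.Nonempty)
    (hfull : nbhd S ≠ Finset.univ) : S.card + 2 ≤ (nbhd S).card := by
  obtain ⟨q, hq⟩ : ∃ q, q ∉ nbhd S := by
    by_contra h
    push_neg at h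
    exact hfull (Finset.eq_univ_of_forall h)
  -- f x = (x - q).val ; on S, f ≥ 3
  set f : ZMod Q → ℕ := fun x => (x - q).val with hf
  have hf3 : ∀ x ∈ S, 3 ≤ f x := by
    intro x hx
    by_contra h
    push_neg at h
    apply hq
    rw [mem_nbhd_iff]
    refine ⟨x, hx, ?_⟩
    have hxq : x = q + ((f x : ℕ) : ZMod Q) := by
      simp [hf, ZMod.natCast_val, ZMod.cast_id]
    interval_cases h' : (f x)
    · left; rw [hxq]; push_cast; ring
    · right; left; rw [hxq]; push_cast; ring
    · right; right; rw [hxq]; push_cast; ring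
  obtain ⟨x₀, hx₀S, hx₀min⟩ := S.exists_min_image f hne
  set m := f x₀ with hm
  have hm3 : 3 ≤ m := hf3 x₀ hx₀S
  have hmQ : m < Q := ZMod.val_lt _
  have hval : ∀ c : ℕ, c ≤ m → f (x₀ - (c : ZMod Q)) = m - c := by
    intro c hc
    have : x₀ - (c : ZMod Q) - q = ((m - c : ℕ) : ZMod Q) := by
      have hx : x₀ - q = ((m : ℕ) : ZMod Q) := by
        simp [hm, hf, ZMod.natCast_val, ZMod.cast_id]
      rw [Nat.cast_sub hc, ← hx]; ring
    simp only [hf, this]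
    rw [ZMod.val_natCast]
    exact Nat.mod_eq_of_lt (lt_of_le_of_lt (Nat.sub_le _ _) hmQ)
  have h1 : f (x₀ - (1 : ZMod Q)) = m - 1 := by
    have := hval 1 (by omega); rwa [Nat.cast_one] at this
  have h2 : f (x₀ - (2 : ZMod Q)) = m - 2 := by
    have := hval 2 (by omega); rwa [Nat.cast_two] at this
  set y₁ := x₀ - (1 : ZMod Q)
  set y₂ := x₀ - (2 : ZMod Q)
  have hy₁N : y₁ ∈ nbhd S := by
    unfold nbhd; apply Finset.mem_union_left; apply Finset.mem_union_right
    exact Finset.mem_image_of_mem _ hx₀S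
  have hy₂N : y₂ ∈ nbhd S := by
    unfold nbhd; apply Finset.mem_union_right
    exact Finset.mem_image_of_mem _ hx₀S
  have hy₁S : y₁ ∉ S := fun h => by have := hx₀min y₁ h; omega
  have hy₂S : y₂ ∉ S := fun h => by have := hx₀min y₂ h; omega
  have hy12 : y₁ ≠ y₂ := fun h => by
    have : f y₁ = f y₂ := by rw [h]
    omega
  have hsub : insert y₁ (insert y₂ S) ⊆ nbhd S := by
    intro z hz
    simp only [Finset.mem_insert] at hz
    rcases hz with rfl | rfl | hz
    · exact hy₁N
    · exact hy₂N
    · unfold nbhd; exact Finset.mem_union_left _ (Finset.mem_union_left _ hz)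
  calc S.card + 2 = (insert y₁ (insert y₂ S)).card := by
        rw [Finset.card_insert_of_notMem (by simp [hy₁S, hy12]),
            Finset.card_insert_of_notMem hy₂S]
  _ ≤ (nbhd S).card := Finset.card_le_card hsub
section Core
variable {Q : ℕ} [NeZero Q]

/-- Core cycle counting lemma -/
lemma core_count (hQ : 2 ≤ Q) {ι : Type} [Fintype ι] [DecidableEq ι]
    (E : ι → ι → Prop) (α : ℕ)
    (hα : ∀ T : Finset ι, (∀ i ∈ T, ∀ j ∈ T, i ≠ j → ¬E i j) → T.card ≤ α)
    (S : ι → Finset (ZMod Q))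
    (h0 : ∀ i, ¬((0 : ZMod Q) ∈ S i ∧ ((Q / 2 : ℕ) : ZMod Q) ∈ S i))
    (hsep : ∀ i j, i ≠ j → E i j → ∀ a ∈ S i, ∀ b ∈ S j, ¬(zmodDist a b ≤ 2)) :
    ∑ i, (S i).card ≤ (Q - 1) * α := by
  have hcardQ : Fintype.card (ZMod Q) = Q := ZMod.card Q
  -- per-index inequality
  have hper : ∀ i, Q * (S i).card ≤ (Q - 1) * (nbhd (S i)).card := by
    intro i
    rcases Finset.eq_empty_or_nonempty (S i) with he | hne
    · simp [he, nbhd]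
    by_cases hfull : nbhd (S i) = Finset.univ
    · -- S i ≠ univ since it misses 0 or Q/2
      have hSne : S i ≠ Finset.univ := by
        intro h
        exact h0 i ⟨h ▸ Finset.mem_univ _, h ▸ Finset.mem_univ _⟩
      have h1 : (S i).card < Q := by
        have := Finset.card_lt_card (Finset.ssubset_univ_iff.mpr hSne)
        rwa [Finset.card_univ, hcardQ] at this
      have h2 : (nbhd (S i)).card = Q := by rw [hfull, Finset.card_univ, hcardQ]
      rw [h2]
      calc Q * (S i).card ≤ Q * (Q - 1) := by
            apply Nat.mul_le_mul_left; omega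
      _ = (Q - 1) * Q := Nat.mul_comm _ _
    · have hiso := nbhd_card (S i) hne hfull
      have hle : (S i).card ≤ Q := by
        have := Finset.card_le_univ (S i); rwa [hcardQ] at this
      obtain ⟨q1, rfl⟩ : ∃ q1, Q = q1 + 1 := ⟨Q - 1, by omega⟩
      have hq1 : 1 ≤ q1 := by omega
      have hstep : (q1 + 1) * (S i).card ≤ (q1 + 1 - 1) * ((S i).card + 2) := by
        have h' : q1 + 1 - 1 = q1 := by omega
        rw [h']
        nlinarith [hle]
      exact le_trans hstep (Nat.mul_le_mul_left _ hiso)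
  -- double counting
  have hdc : ∑ i, (nbhd (S i)).card = ∑ p : ZMod Q,
      (Finset.univ.filter (fun i : ι => p ∈ nbhd (S i))).card := by
    have : ∀ i : ι, (nbhd (S i)).card
        = ∑ p : ZMod Q, if p ∈ nbhd (S i) then 1 else 0 := by
      intro i
      rw [Finset.sum_ite_mem, Finset.univ_inter]
      exact (Finset.card_eq_sum_ones _)
    rw [Finset.sum_congr rfl (fun i _ => this i), Finset.sum_comm]
    congr 1
    ext p
    rw [Finset.card_filter]
  have hwin : ∀ p : ZMod Q,
      (Finset.univ.filter (fun i : ι => p ∈ nbhd (S i))).card ≤ α := by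
    intro p
    apply hα
    intro i hi j hj hij hE
    simp only [Finset.mem_filter, Finset.mem_univ, true_and] at hi hj
    rw [mem_nbhd_iff] at hi hj
    obtain ⟨a, haS, ha⟩ := hi
    obtain ⟨b, hbS, hb⟩ := hj
    exact hsep i j hij hE a haS b hbS (window_dist ha hb)
  have hQsum : ∑ i, (nbhd (S i)).card ≤ Q * α := by
    rw [hdc]
    calc ∑ p : ZMod Q, (Finset.univ.filter (fun i : ι => p ∈ nbhd (S i))).card
        ≤ ∑ _p : ZMod Q, α := Finset.sum_le_sum (fun p _ => hwin p)
    _ = Q * α := by rw [Finset.sum_const, Finset.card_univ, hcardQ, smul_eq_mul]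
  have : Q * (∑ i, (S i).card) ≤ Q * ((Q - 1) * α) := by
    calc Q * (∑ i, (S i).card) = ∑ i, Q * (S i).card := Finset.mul_sum _ _ _
    _ ≤ ∑ i, (Q - 1) * (nbhd (S i)).card := Finset.sum_le_sum (fun i _ => hper i)
    _ = (Q - 1) * ∑ i, (nbhd (S i)).card := (Finset.mul_sum _ _ _).symm
    _ ≤ (Q - 1) * (Q * α) := Nat.mul_le_mul_left _ hQsum
    _ = Q * ((Q - 1) * α) := by ring
  exact Nat.le_of_mul_le_mul_left this (by omega)

end Core
section Main
variable {Q : ℕ} [NeZero Q]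

def CloseAll {Q : ℕ} {n : ℕ} (x y : Fin n → ZMod Q) : Prop :=
  ∀ i, zmodDist (x i) (y i) ≤ 2

def IsPair {Q : ℕ} {n : ℕ} (x x' : Fin n → ZMod Q) (s : Fin n) : Prop :=
  (∀ i, i < s → x i = x' i) ∧ x s = 0 ∧ x' s = ((Q / 2 : ℕ) : ZMod Q) ∧
    ∀ i, s < i → zmodDist (x i) (x' i) ≤ 2

def PairFree {Q : ℕ} {n : ℕ} (B : Finset (Fin n → ZMod Q)) : Prop :=
  ∀ x ∈ B, ∀ x' ∈ B, ∀ s, ¬ IsPair x x' s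

def SepSets {Q : ℕ} {n : ℕ} (A C : Finset (Fin n → ZMod Q)) : Prop :=
  ∀ x ∈ A, ∀ y ∈ C, ¬ CloseAll x y

lemma q2_ne_zero (hQ : 2 ≤ Q) : ((Q / 2 : ℕ) : ZMod Q) ≠ 0 := by
  intro h
  have h1 : ((Q / 2 : ℕ) : ZMod Q).val = 0 := by rw [h]; exact ZMod.val_zero
  rw [ZMod.val_natCast, Nat.mod_eq_of_lt (by omega)] at h1
  omega

lemma family_bound (hQ : 2 ≤ Q) : ∀ (n : ℕ) {ι : Type} [Fintype ι] [DecidableEq ι]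
    (E : ι → ι → Prop) (α : ℕ)
    (_hα : ∀ T : Finset ι, (∀ i ∈ T, ∀ j ∈ T, i ≠ j → ¬E i j) → T.card ≤ α)
    (A : ι → Finset (Fin n → ZMod Q))
    (_hpf : ∀ i, PairFree (A i))
    (_hsep : ∀ i j, i ≠ j → E i j → SepSets (A i) (A j)),
    ∑ i, (A i).card ≤ (Q - 1) ^ n * α := by
  intro n
  induction n with
  | zero =>
    intro ι _ _ E α hα A hpf hsep
    classical
    set T : Finset ι := Finset.univ.filter (fun i => (A i).Nonempty) with hT
    have hTind : ∀ i ∈ T, ∀ j ∈ T, i ≠ j → ¬E i j := by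
      intro i hi j hj hij hE
      rw [hT, Finset.mem_filter] at hi hj
      obtain ⟨x, hx⟩ := hi.2
      obtain ⟨y, hy⟩ := hj.2
      exact hsep i j hij hE x hx y hy (fun k => k.elim0)
    have hcard1 : ∀ i, (A i).card ≤ 1 :=
      fun i => Finset.card_le_one.mpr (fun a _ b _ => funext (fun k => k.elim0))
    calc ∑ i, (A i).card = ∑ i ∈ T, (A i).card := by
          rw [hT]
          exact (Finset.sum_filter_of_ne (fun i _ h =>
            Finset.card_pos.mp (Nat.pos_of_ne_zero h))).symm
    _ ≤ ∑ _i ∈ T, 1 := Finset.sum_le_sum (fun i _ => hcard1 i)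
    _ = T.card := by rw [Finset.sum_const, smul_eq_mul, mul_one]
    _ ≤ α := hα T hTind
    _ = (Q - 1) ^ 0 * α := by ring
  | succ m ih =>
    intro ι _ _ E α hα A hpf hsep
    classical
    set q2 : ZMod Q := ((Q / 2 : ℕ) : ZMod Q) with hq2
    set E' : ι × ZMod Q → ι × ZMod Q → Prop := fun p r =>
      (p.1 = r.1 ∧ ((p.2 = 0 ∧ r.2 = q2) ∨ (p.2 = q2 ∧ r.2 = 0))) ∨
      (p.1 ≠ r.1 ∧ E p.1 r.1 ∧ zmodDist p.2 r.2 ≤ 2) with hE'def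
    set A' : ι × ZMod Q → Finset (Fin m → ZMod Q) := fun p =>
      ((A p.1).filter (fun x => x 0 = p.2)).image Fin.tail with hA'def
    -- membership unfolding for A'
    have hA'mem : ∀ (i : ι) (a : ZMod Q) (u : Fin m → ZMod Q),
        u ∈ A' (i, a) → ∃ x ∈ A i, x 0 = a ∧ Fin.tail x = u := by
      intro i a u hu
      rw [hA'def] at hu
      simp only [Finset.mem_image, Finset.mem_filter] at hu
      obtain ⟨x, ⟨hx1, hx2⟩, hx3⟩ := hu
      exact ⟨x, hx1, hx2, hx3⟩
    -- card of A'
    have hA'card : ∀ (i : ι) (a : ZMod Q),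
        (A' (i, a)).card = ((A i).filter (fun x => x 0 = a)).card := by
      intro i a
      rw [hA'def]
      apply Finset.card_image_of_injOn
      intro x hx y hy hxy
      rw [Finset.mem_coe, Finset.mem_filter] at hx hy
      funext k
      cases k using Fin.cases with
      | zero => rw [hx.2, hy.2]
      | succ j => exact congrFun hxy j
    -- independence bound for E'
    have hα' : ∀ T : Finset (ι × ZMod Q),
        (∀ p ∈ T, ∀ r ∈ T, p ≠ r → ¬E' p r) → T.card ≤ (Q - 1) * α := by
      intro T hT
      set S : ι → Finset (ZMod Q) := fun i =>
        (T.filter (fun p => p.1 = i)).image Prod.snd with hSdef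
      have hSmem : ∀ (i : ι) (a : ZMod Q), a ∈ S i ↔ (i, a) ∈ T := by
        intro i a
        rw [hSdef]
        simp only [Finset.mem_image, Finset.mem_filter]
        constructor
        · rintro ⟨⟨i', a'⟩, ⟨hmem, h1⟩, h2⟩
          simp only at h1 h2
          rw [← h1, ← h2]; exact hmem
        · intro h; exact ⟨(i, a), ⟨h, rfl⟩, rfl⟩
      have hcore := core_count (Q := Q) hQ E α hα S ?_ ?_
      · -- T.card = ∑ (S i).card
        have hfib : T.card = ∑ i, (T.filter (fun p => p.1 = i)).card :=
          Finset.card_eq_sum_card_fiberwise (fun x _ => Finset.mem_univ x.1)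
        have himg : ∀ i, (T.filter (fun p => p.1 = i)).card = (S i).card := by
          intro i
          rw [hSdef]
          refine (Finset.card_image_of_injOn ?_).symm
          rintro ⟨i1, a1⟩ h1 ⟨i2, a2⟩ h2 h3
          rw [Finset.mem_coe, Finset.mem_filter] at h1 h2
          simp only at h1 h2 h3
          rw [Prod.mk.injEq]
          exact ⟨h1.2.trans h2.2.symm, h3⟩
        rw [hfib]
        calc ∑ i, (T.filter (fun p => p.1 = i)).card
            = ∑ i, (S i).card := Finset.sum_congr rfl (fun i _ => himg i)
        _ ≤ (Q - 1) * α := hcore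
      · -- h0
        intro i ⟨hz, hh⟩
        rw [hSmem] at hz hh
        have hne : ((i, (0 : ZMod Q))) ≠ ((i, ((Q / 2 : ℕ) : ZMod Q))) := by
          intro h
          rw [Prod.mk.injEq] at h
          exact q2_ne_zero hQ h.2.symm
        exact hT _ hz _ hh hne (Or.inl ⟨rfl, Or.inl ⟨rfl, rfl⟩⟩)
      · -- hsep for core
        intro i j hij hE a ha b hb hd
        rw [hSmem] at ha hb
        have hne : ((i, a)) ≠ ((j, b)) := by
          intro h; rw [Prod.mk.injEq] at h; exact hij h.1
        exact hT _ ha _ hb hne (Or.inr ⟨hij, hE, hd⟩)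
    -- pair-freeness of A'
    have hpf' : ∀ p, PairFree (A' p) := by
      rintro ⟨i, a⟩ u hu v hv s' ⟨hpre, h0, hq, htail⟩
      obtain ⟨x, hx, hx0, hxt⟩ := hA'mem i a u hu
      obtain ⟨y, hy, hy0, hyt⟩ := hA'mem i a v hv
      refine hpf i x hx y hy s'.succ ⟨?_, ?_, ?_, ?_⟩
      · intro k hk
        cases k using Fin.cases with
        | zero => rw [hx0, hy0]
        | succ j =>
          have hj : j < s' := by
            rwa [Fin.succ_lt_succ_iff] at hk
          have : u j = v j := hpre j hj
          calc x j.succ = u j := by rw [← hxt]; rfl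
          _ = v j := this
          _ = y j.succ := by rw [← hyt]; rfl
      · calc x s'.succ = u s' := by rw [← hxt]; rfl
        _ = 0 := h0
      · calc y s'.succ = v s' := by rw [← hyt]; rfl
        _ = ((Q / 2 : ℕ) : ZMod Q) := hq
      · intro k hk
        cases k using Fin.cases with
        | zero =>
          exfalso
          exact absurd hk (by simp [Fin.lt_iff_val_lt_val])
        | succ j =>
          have hj : s' < j := by rwa [Fin.succ_lt_succ_iff] at hk
          have hx' : x j.succ = u j := by rw [← hxt]; rfl
          have hy' : y j.succ = v j := by rw [← hyt]; rfl
          rw [hx', hy']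
          exact htail j hj
    -- separation of A'
    have hsep' : ∀ p r, p ≠ r → E' p r → SepSets (A' p) (A' r) := by
      rintro ⟨i, a⟩ ⟨j, b⟩ hne hE'h u hu v hv hclose
      obtain ⟨x, hx, hx0, hxt⟩ := hA'mem i a u hu
      obtain ⟨y, hy, hy0, hyt⟩ := hA'mem j b v hv
      have hxsucc : ∀ k : Fin m, x k.succ = u k := fun k => by rw [← hxt]; rfl
      have hysucc : ∀ k : Fin m, y k.succ = v k := fun k => by rw [← hyt]; rfl
      rcases hE'h with ⟨heq, hcase⟩ | ⟨hij, hE, hd⟩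
      · simp only at heq
        subst heq
        rcases hcase with ⟨ha0, hbq⟩ | ⟨haq, hb0⟩
        · simp only at ha0 hbq
          refine hpf i x hx y hy 0 ⟨?_, ?_, ?_, ?_⟩
          · intro k hk; exact absurd hk (by simp [Fin.lt_iff_val_lt_val])
          · rw [hx0, ha0]
          · rw [hy0, hbq]
          · intro k hk
            cases k using Fin.cases with
            | zero => exact absurd hk (lt_irrefl _)
            | succ j => rw [hxsucc, hysucc]; exact hclose j
        · simp only at haq hb0
          refine hpf i y hy x hx 0 ⟨?_, ?_, ?_, ?_⟩
          · intro k hk; exact absurd hk (by simp [Fin.lt_iff_val_lt_val])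
          · rw [hy0, hb0]
          · rw [hx0, haq]
          · intro k hk
            cases k using Fin.cases with
            | zero => exact absurd hk (lt_irrefl _)
            | succ j => rw [hxsucc, hysucc, zmodDist_comm]; exact hclose j
      · refine hsep i j hij hE x hx y hy ?_
        intro k
        cases k using Fin.cases with
        | zero => rw [hx0, hy0]; exact hd
        | succ j => rw [hxsucc, hysucc]; exact hclose j
    -- apply induction hypothesis
    have hIH := ih E' ((Q - 1) * α) hα' A' hpf' hsep'
    have hsum : ∑ p : ι × ZMod Q, (A' p).card = ∑ i, (A i).card := by
      rw [Fintype.sum_prod_type]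
      apply Finset.sum_congr rfl
      intro i _
      calc ∑ a : ZMod Q, (A' (i, a)).card
          = ∑ a : ZMod Q, ((A i).filter (fun x => x 0 = a)).card :=
            Finset.sum_congr rfl (fun a _ => hA'card i a)
      _ = (A i).card :=
            (Finset.card_eq_sum_card_fiberwise (fun x _ => Finset.mem_univ (x 0))).symm
    rw [hsum] at hIH
    calc ∑ i, (A i).card ≤ (Q - 1) ^ m * ((Q - 1) * α) := hIH
    _ = (Q - 1) ^ (m + 1) * α := by ring

lemma pairfree_card_bound (hQ : 2 ≤ Q) {n : ℕ} (B : Finset (Fin n → ZMod Q))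
    (hpf : PairFree B) : B.card ≤ (Q - 1) ^ n := by
  have := family_bound hQ n (ι := PUnit) (fun _ _ => False) 1
    (fun T _ => Finset.card_le_one.mpr (fun a _ b _ => Subsingleton.elim a b))
    (fun _ => B) (fun _ => hpf)
    (fun i j hne _ => absurd (Subsingleton.elim i j) hne)
  rwa [Fintype.sum_unique, mul_one] at this

end Main
/-- Bourgain's combinatorial lemma: if `Q` is even, `P > Q log ℓ`, and `B ⊆ (ℤ/Qℤ)^P` has
`|B| > Q^P / ℓ`, then there are `x, x' ∈ B` and an index `s` with `xᵢ = x'ᵢ` for `i < s`,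
`x_s = 0`, `x'_s = Q/2`, and `d(xᵢ, x'ᵢ) ≤ 2` for `i > s`. -/
theorem bourgain_combinatorial_lemma (Q : ℕ) (hQpos : 0 < Q) (hQeven : Even Q)
    (ℓ : ℕ) (hℓ : 0 < ℓ) (P : ℕ) (hP : (P : ℝ) > Q * Real.log ℓ)
    (B : Finset (Fin P → ZMod Q)) (hB : (B.card : ℝ) > (Q : ℝ) ^ P / ℓ) :
    ∃ x ∈ B, ∃ x' ∈ B, ∃ s : Fin P,
      (∀ i : Fin P, i < s → x i = x' i) ∧
      x s = 0 ∧ x' s = ((Q / 2 : ℕ) : ZMod Q) ∧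
      ∀ i : Fin P, s < i → zmodDist (x i) (x' i) ≤ 2 := by
  haveI : NeZero Q := ⟨hQpos.ne'⟩
  have hQ2 : 2 ≤ Q := by
    obtain ⟨k, hk⟩ := hQeven
    omega
  by_contra hcon
  have hpf : PairFree B := by
    intro x hx x' hx' s hp
    exact hcon ⟨x, hx, x', hx', s, hp.1, hp.2.1, hp.2.2.1, hp.2.2.2⟩
  have hcard := pairfree_card_bound hQ2 B hpf
  -- analytic contradiction
  set q : ℝ := (Q : ℝ) with hq
  have hq2 : (2 : ℝ) ≤ q := by
    rw [hq]
    exact_mod_cast hQ2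
  have hq1pos : (0 : ℝ) < q - 1 := by linarith
  have hcast : (((Q - 1) ^ P : ℕ) : ℝ) = (q - 1) ^ P := by
    rw [Nat.cast_pow, Nat.cast_sub (by omega : 1 ≤ Q), Nat.cast_one]
  have hcardR : (B.card : ℝ) ≤ (q - 1) ^ P := by
    rw [← hcast]; exact_mod_cast hcard
  have hℓpos : (0 : ℝ) < (ℓ : ℝ) := by exact_mod_cast hℓ
  have hlog : Real.log ℓ < (P : ℝ) * (1 / q) := by
    rw [mul_one_div]
    rw [lt_div_iff₀ (by linarith : (0:ℝ) < q)]
    calc Real.log ℓ * q = q * Real.log ℓ := mul_comm _ _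
    _ < P := hP
  have hℓlt : (ℓ : ℝ) < Real.exp ((P : ℝ) * (1 / q)) := by
    calc (ℓ : ℝ) = Real.exp (Real.log ℓ) := (Real.exp_log hℓpos).symm
    _ < Real.exp ((P : ℝ) * (1 / q)) := Real.exp_lt_exp.mpr hlog
  have hexp1 : Real.exp (1 / q) ≤ q / (q - 1) := by
    have h1 : (1 : ℝ) - 1 / q ≤ Real.exp (-(1 / q)) := by
      have := Real.add_one_le_exp (-(1 / q))
      linarith
    have h2 : (0 : ℝ) < 1 - 1 / q := by
      have : 1 / q ≤ 1 / 2 := by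
        apply one_div_le_one_div_of_le <;> linarith
      linarith
    have h3 : Real.exp (1 / q) = 1 / Real.exp (-(1 / q)) := by
      rw [Real.exp_neg]; field_simp
    rw [h3]
    have h4 : 1 / Real.exp (-(1 / q)) ≤ 1 / (1 - 1 / q) :=
      one_div_le_one_div_of_le h2 h1
    have h5 : 1 / (1 - 1 / q) = q / (q - 1) := by
      field_simp
    linarith
  have hexpP : Real.exp ((P : ℝ) * (1 / q)) ≤ (q / (q - 1)) ^ P := by
    rw [Real.exp_nat_mul]
    exact pow_le_pow_left₀ (Real.exp_pos _).le hexp1 P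
  have hkey : (ℓ : ℝ) * (q - 1) ^ P < q ^ P := by
    have h6 : (ℓ : ℝ) < (q / (q - 1)) ^ P := lt_of_lt_of_le hℓlt hexpP
    have h7 : (q / (q - 1)) ^ P = q ^ P / (q - 1) ^ P := div_pow _ _ _
    rw [h7] at h6
    have h8 : (0 : ℝ) < (q - 1) ^ P := pow_pos hq1pos P
    calc (ℓ : ℝ) * (q - 1) ^ P < (q ^ P / (q - 1) ^ P) * (q - 1) ^ P := by
          exact mul_lt_mul_of_pos_right h6 h8
    _ = q ^ P := by field_simp
  have hfin : (q - 1) ^ P < q ^ P / ℓ := by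
    rw [lt_div_iff₀ hℓpos]
    calc (q - 1) ^ P * ℓ = (ℓ : ℝ) * (q - 1) ^ P := mul_comm _ _
    _ < q ^ P := hkey
  linarith
end

section
/- Let ℓ, Q, k, N ∈ ℕ with N = Q^{k+1}, Q even and 4ℓ < Q. Then the trigonometric polynomial p(x) = Σ_{|m| ≤ ℓQ^k} (1 - cos(2π(ℓQ^k - |m|)/N)) e^{2πimx} is non-negative on the torus T. -/
/-!
Write `Δ` for the forward difference. A sequence `F` on `ℕ` that vanishes from `L` on is
recovered from its second differences by summing twice:
`F a = ∑_{j < L} (j + 1 - a)₊ Δ²F j`. Hence `∑_{|m| ≤ L} F |m| e(m x)` is the combination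
`∑_{j < L} Δ²F j K_j(x)` of Fejér kernels `K_j(x) = ∑_{|m| ≤ j} (j + 1 - |m|) e(m x)`,
and `K_j(x) = |∑_{i ≤ j} e(i x)|² ≥ 0`. So the sum is non-negative as soon as `F` is convex.
For `F a = 1 - cos (2π(L - a)/N)` this holds because `cos` is concave on `[0, π/2]`.
-/

open Finset fwdDiff

section SecondDifferences

variable {G : Type*} [AddCommGroup G]

lemma eq_neg_sum_Ico_fwdDiff {L : ℕ} {F : ℕ → G} (hF : ∀ m, L ≤ m → F m = 0) (a : ℕ) :
    F a = -∑ i ∈ Ico a L, Δ_[1] F i := by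
  rcases le_total a L with h | h
  · rw [show ∑ i ∈ Ico a L, Δ_[1] F i = F L - F a from sum_Ico_sub F h, hF L le_rfl]
    abel
  · simp [hF a h, Ico_eq_empty_of_le h]

/-- The truncated difference `j + 1 - a` is the hinge `(j + 1 - a)₊`. -/
lemma eq_sum_nsmul_fwdDiff_fwdDiff {L : ℕ} {F : ℕ → G} (hF : ∀ m, L ≤ m → F m = 0)
    (a : ℕ) :
    F a = ∑ j ∈ range L, (j + 1 - a) • Δ_[1] (Δ_[1] F) j := by
  have hΔF : ∀ m, L ≤ m → Δ_[1] F m = 0 := fun m hm => by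
    simp [fwdDiff, hF m hm, hF (m + 1) (by omega)]
  calc F a = ∑ i ∈ Ico a L, ∑ j ∈ Ico i L, Δ_[1] (Δ_[1] F) j := by
        rw [eq_neg_sum_Ico_fwdDiff hF a, ← sum_neg_distrib]
        exact sum_congr rfl fun i _ => by rw [eq_neg_sum_Ico_fwdDiff hΔF i, neg_neg]
    _ = ∑ j ∈ range L, ∑ _i ∈ Ico a (j + 1), Δ_[1] (Δ_[1] F) j :=
        sum_comm' fun i j => by simp only [mem_Ico, mem_range]; omega
    _ = ∑ j ∈ range L, (j + 1 - a) • Δ_[1] (Δ_[1] F) j := by simp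

end SecondDifferences

section Fejer

variable {M : Type*} [AddCommMonoid M]

lemma sum_Icc_sum_Icc_sub_eq_sum_nsmul {n K : ℕ} (hnK : n ≤ K) (g : ℤ → M) :
    ∑ i ∈ Icc 0 (n : ℤ), ∑ j ∈ Icc 0 (n : ℤ), g (i - j)
      = ∑ m ∈ Icc (-K : ℤ) K, (n + 1 - m.natAbs) • g m := by
  calc ∑ i ∈ Icc 0 (n : ℤ), ∑ j ∈ Icc 0 (n : ℤ), g (i - j)
        = ∑ i ∈ Icc 0 (n : ℤ), ∑ m ∈ Icc (i - n) i, g m :=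
        sum_congr rfl fun i _ => sum_nbij' (i - ·) (i - ·)
          (fun j hj => by simp only [mem_Icc] at hj ⊢; omega)
          (fun m hm => by simp only [mem_Icc] at hm ⊢; omega)
          (fun j _ => sub_sub_cancel i j) (fun m _ => sub_sub_cancel i m) (fun _ _ => rfl)
    _ = ∑ m ∈ Icc (-K : ℤ) K, ∑ _i ∈ Icc (max 0 m) (min n (n + m)), g m :=
        sum_comm' fun i m => by simp only [mem_Icc]; omega
    _ = ∑ m ∈ Icc (-K : ℤ) K, (n + 1 - m.natAbs) • g m := by
        refine sum_congr rfl fun m hm => ?_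
        rw [sum_const, Int.card_Icc]
        congr 1
        simp only [mem_Icc] at hm
        omega

variable {T : ℝ}

lemma normSq_sum_fourier_eq {n K : ℕ} (hnK : n ≤ K) (x : AddCircle T) :
    (Complex.normSq (∑ i ∈ Icc 0 (n : ℤ), fourier i x) : ℂ)
      = ∑ m ∈ Icc (-K : ℤ) K, (n + 1 - m.natAbs) • fourier m x := by
  rw [← Complex.mul_conj, map_sum, sum_mul_sum, ← sum_Icc_sum_Icc_sub_eq_sum_nsmul hnK]
  refine sum_congr rfl fun i _ => sum_congr rfl fun j _ => ?_
  rw [← fourier_neg, ← fourier_add, sub_eq_add_neg]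

lemma sum_mul_fourier_eq_sum_fwdDiff_mul_normSq {L : ℕ} {F : ℕ → ℝ}
    (hF : ∀ m, L ≤ m → F m = 0) (x : AddCircle T) :
    ∑ m ∈ Icc (-L : ℤ) L, (F m.natAbs : ℂ) * fourier m x
      = ((∑ j ∈ range L, Δ_[1] (Δ_[1] F) j
          * Complex.normSq (∑ i ∈ Icc 0 (j : ℤ), fourier i x) : ℝ) : ℂ) := by
  calc ∑ m ∈ Icc (-L : ℤ) L, (F m.natAbs : ℂ) * fourier m x
      = ∑ m ∈ Icc (-L : ℤ) L, ∑ j ∈ range L,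
          ((Δ_[1] (Δ_[1] F) j : ℝ) : ℂ) * ((j + 1 - m.natAbs) • fourier m x) :=
        sum_congr rfl fun m _ => by
          simp only [eq_sum_nsmul_fwdDiff_fwdDiff hF m.natAbs, Complex.ofReal_sum,
            Complex.ofReal_nsmul, sum_mul, smul_mul_assoc, mul_smul_comm]
    _ = ∑ j ∈ range L, ((Δ_[1] (Δ_[1] F) j : ℝ) : ℂ)
          * ∑ m ∈ Icc (-L : ℤ) L, (j + 1 - m.natAbs) • fourier m x := by
        rw [sum_comm]
        simp_rw [mul_sum]
    _ = _ := by
        push_cast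
        exact sum_congr rfl fun j hj => by rw [normSq_sum_fourier_eq (mem_range.mp hj).le]

end Fejer

section CosineWeight

/-- The paper's coefficient `1 - cos (2π(L - a)/N)`; the truncated subtraction makes it vanish
for `a ≥ L`. -/
noncomputable def cosineWeight (L N a : ℕ) : ℝ := 1 - Real.cos (2 * Real.pi * (L - a : ℕ) / N)

lemma cosineWeight_eq_zero_of_le {L N m : ℕ} (hm : L ≤ m) : cosineWeight L N m = 0 := by
  simp [cosineWeight, Nat.sub_eq_zero_of_le hm]

lemma cosineWeight_nonneg (L N a : ℕ) : 0 ≤ cosineWeight L N a :=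
  sub_nonneg.2 (Real.cos_le_one _)

lemma two_mul_cos_sub_cos_add_sub_cos_sub (t h : ℝ) :
    2 * Real.cos t - Real.cos (t + h) - Real.cos (t - h) = 2 * Real.cos t * (1 - Real.cos h) := by
  rw [Real.cos_add, Real.cos_sub]
  ring

lemma fwdDiff_fwdDiff_cosineWeight_nonneg {L N : ℕ} (hLN : 4 * L ≤ N) (j : ℕ) :
    0 ≤ Δ_[1] (Δ_[1] (cosineWeight L N)) j := by
  simp only [fwdDiff, add_assoc, one_add_one_eq_two]
  rcases lt_trichotomy (j + 1) L with hj | hj | hj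
  · obtain ⟨u, rfl⟩ := Nat.exists_eq_add_of_lt hj
    have hN : (0 : ℝ) < N := by exact_mod_cast (by omega : 0 < N)
    set t := 2 * Real.pi * (u + 1) / N
    set h := 2 * Real.pi / N
    have hcos : 0 ≤ Real.cos t := by
      have ht : 0 ≤ t := by positivity
      refine Real.cos_nonneg_of_mem_Icc ⟨by linarith [Real.pi_pos], ?_⟩
      rw [div_le_iff₀ hN]
      have : 4 * ((u : ℝ) + 1) ≤ N := by exact_mod_cast (by omega : 4 * (u + 1) ≤ N)
      nlinarith [Real.pi_pos]
    simp only [cosineWeight, show j + 1 + u + 1 - j = u + 2 by omega,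
      show j + 1 + u + 1 - (j + 1) = u + 1 by omega, show j + 1 + u + 1 - (j + 2) = u by omega]
    rw [show 2 * Real.pi * ((u + 2 : ℕ) : ℝ) / N = t + h by push_cast [t, h]; ring,
      show 2 * Real.pi * ((u + 1 : ℕ) : ℝ) / N = t by push_cast [t]; ring,
      show 2 * Real.pi * (u : ℝ) / N = t - h by push_cast [t, h]; ring]
    linarith [two_mul_cos_sub_cos_add_sub_cos_sub t h,
      mul_nonneg (mul_nonneg zero_le_two hcos) (sub_nonneg.2 (Real.cos_le_one h))]
  · simp only [cosineWeight_eq_zero_of_le hj.ge,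
      cosineWeight_eq_zero_of_le (by omega : L ≤ j + 2)]
    linarith [cosineWeight_nonneg L N j]
  · simp [cosineWeight_eq_zero_of_le (by omega : L ≤ j),
      cosineWeight_eq_zero_of_le (by omega : L ≤ j + 1),
      cosineWeight_eq_zero_of_le (by omega : L ≤ j + 2)]

end CosineWeight

theorem cosine_trig_poly_nonneg_general (ℓ Q k N : ℕ)
    (hQℓ : 4 * ℓ < Q) (hN : N = Q ^ (k + 1)) (x : ℝ) :
    (∑ m ∈ Finset.Icc (-(ℓ * Q ^ k : ℤ)) (ℓ * Q ^ k : ℤ),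
        ((1 - Real.cos (2 * Real.pi * ((ℓ * Q ^ k : ℝ) - |(m : ℝ)|) / N) : ℝ) : ℂ) *
          Complex.exp (2 * (Real.pi : ℂ) * Complex.I * (m : ℂ) * (x : ℂ))).im = 0 ∧
    0 ≤ (∑ m ∈ Finset.Icc (-(ℓ * Q ^ k : ℤ)) (ℓ * Q ^ k : ℤ),
        ((1 - Real.cos (2 * Real.pi * ((ℓ * Q ^ k : ℝ) - |(m : ℝ)|) / N) : ℝ) : ℂ) *
          Complex.exp (2 * (Real.pi : ℂ) * Complex.I * (m : ℂ) * (x : ℂ))).re := by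
  set L := ℓ * Q ^ k
  have hLN : 4 * L ≤ N := by
    rw [hN, pow_succ', ← mul_assoc]
    exact Nat.mul_le_mul_right _ hQℓ.le
  have hLZ : (ℓ * Q ^ k : ℤ) = L := by simp [L]
  have hLR : (ℓ * Q ^ k : ℝ) = L := by simp [L]
  have hsum : ∑ m ∈ Icc (-L : ℤ) L,
        ((1 - Real.cos (2 * Real.pi * ((L : ℝ) - |(m : ℝ)|) / N) : ℝ) : ℂ) *
          Complex.exp (2 * (Real.pi : ℂ) * Complex.I * (m : ℂ) * (x : ℂ))
      = ∑ m ∈ Icc (-L : ℤ) L,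
          (cosineWeight L N m.natAbs : ℂ) * fourier m (x : AddCircle (1 : ℝ)) :=
    sum_congr rfl fun m hm => by
      rw [fourier_coe_apply, Complex.ofReal_one, div_one, cosineWeight,
        Nat.cast_sub (by simp only [mem_Icc] at hm; omega), Nat.cast_natAbs, Int.cast_abs]
  rw [hLZ, hLR, hsum,
    sum_mul_fourier_eq_sum_fwdDiff_mul_normSq fun m => cosineWeight_eq_zero_of_le,
    Complex.ofReal_im, Complex.ofReal_re]
  exact ⟨rfl, sum_nonneg fun j _ =>
    mul_nonneg (fwdDiff_fwdDiff_cosineWeight_nonneg hLN j) (Complex.normSq_nonneg _)⟩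

/-- For `N = Q^{k+1}`, `Q` even with `4ℓ < Q`, the trigonometric polynomial
`p(x) = ∑_{|m| ≤ ℓQ^k} (1 - cos(2π(ℓQ^k - |m|)/N)) e^{2πimx}` is real-valued and
non-negative on the torus. -/
theorem cosine_trig_poly_nonneg (ℓ Q k N : ℕ) (hℓ : 0 < ℓ) (hQ : Even Q)
    (hQℓ : 4 * ℓ < Q) (hN : N = Q ^ (k + 1)) (x : ℝ) :
    (∑ m ∈ Finset.Icc (-(ℓ * Q ^ k : ℤ)) (ℓ * Q ^ k : ℤ),
        ((1 - Real.cos (2 * Real.pi * ((ℓ * Q ^ k : ℝ) - |(m : ℝ)|) / N) : ℝ) : ℂ) *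
          Complex.exp (2 * (Real.pi : ℂ) * Complex.I * (m : ℂ) * (x : ℂ))).im = 0 ∧
    0 ≤ (∑ m ∈ Finset.Icc (-(ℓ * Q ^ k : ℤ)) (ℓ * Q ^ k : ℤ),
        ((1 - Real.cos (2 * Real.pi * ((ℓ * Q ^ k : ℝ) - |(m : ℝ)|) / N) : ℝ) : ℂ) *
          Complex.exp (2 * (Real.pi : ℂ) * Complex.I * (m : ℂ) * (x : ℂ))).re :=
  cosine_trig_poly_nonneg_general ℓ Q k N hQℓ hN x
end
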